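/- arXiv:2201.12019 — 8 statements merged into one kernel-verified Lean document; each statement's English description precedes it below -/
import Mathlib

section
/- Suppose (b_n) is a sequence in ℚ with v_p(b_{n+2} B_{n+1}) < v_p(B_n) for all n ≥ 0, where A_n, B_n are defined by the continued fraction recurrences A_{-1}=1, A_0=b_0, B_{-1}=0, B_0=1, A_{n+1}=b_{n+1}A_n + A_{n-1}, B_{n+1}=b_{n+1}B_n + B_{n-1}. If moreover v_p(b_n) ≤ 0 for all n and v_p(b_n) < 0 for all odd n, then for all n ≥ 1: v_p(A_n) = v_p(b_0) + v_p(b_1) + ... + v_p(b_n) and v_p(B_n) = v_p(b_1) + ... + v_p(b_n). -/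
/-!
Each recurrence `X_{n+2} = b_{n+2} X_{n+1} + X_n` is dominated by its first term: for `B` this is
the hypothesis, and for `A`, inductively, `v_p(b_{n+2} A_{n+1}) - v_p(A_n) = v_p(b_{n+1}) + v_p(b_{n+2})`,
which is negative because one of two consecutive indices is odd. By the ultrametric inequality
the valuation of `X_{n+2}` is then that of `b_{n+2} X_{n+1}`, and the valuations add up.
-/

/-- Numerators of the convergents of `[b 0, b 1, …]`. -/
def cfA (b : ℕ → ℚ) : ℕ → ℚ
  | 0 => b 0
  | 1 => b 1 * b 0 + 1
  | (n + 2) => b (n + 2) * cfA b (n + 1) + cfA b n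

/-- Denominators of the convergents of `[b 0, b 1, …]`. -/
def cfB (b : ℕ → ℚ) : ℕ → ℚ
  | 0 => 1
  | 1 => b 1
  | (n + 2) => b (n + 2) * cfB b (n + 1) + cfB b n

namespace padicValRat

variable {p : ℕ}

theorem add_ne_zero_of_lt {q r : ℚ} (hval : padicValRat p q < padicValRat p r) : q + r ≠ 0 :=
  fun h => hval.ne (by rw [eq_neg_of_add_eq_zero_right h, padicValRat.neg])

theorem mul_add_of_lt [Fact p.Prime] {c y x : ℚ} (hc : c ≠ 0) (hy : y ≠ 0) (hx : x ≠ 0)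
    (hval : padicValRat p (c * y) < padicValRat p x) :
    c * y + x ≠ 0 ∧ padicValRat p (c * y + x) = padicValRat p c + padicValRat p y :=
  ⟨add_ne_zero_of_lt hval, by
    rw [add_eq_of_lt (add_ne_zero_of_lt hval) (mul_ne_zero hc hy) hx hval, padicValRat.mul hc hy]⟩

end padicValRat

section Convergents

variable {p : ℕ} {b : ℕ → ℚ}

theorem cfB_ne_zero_and_padicValRat [Fact p.Prime] (hbne : ∀ n, b n ≠ 0)
    (hrec : ∀ n, padicValRat p (b (n + 2) * cfB b (n + 1)) < padicValRat p (cfB b n)) (n : ℕ) :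
    cfB b n ≠ 0 ∧ padicValRat p (cfB b n) = ∑ i ∈ Finset.Icc 1 n, padicValRat p (b i) := by
  induction n using Nat.twoStepInduction with
  | zero => simp [cfB]
  | one => simp [cfB, hbne 1]
  | more n ih₀ ih₁ =>
    obtain ⟨hne, hval⟩ := padicValRat.mul_add_of_lt (hbne (n + 2)) ih₁.1 ih₀.1 (hrec n)
    refine ⟨hne, ?_⟩
    rw [cfB, hval, Finset.sum_Icc_succ_top (by omega : 1 ≤ n + 2), ih₁.2, add_comm]

theorem padicValRat_add_succ_neg (hle : ∀ n, padicValRat p (b n) ≤ 0)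
    (hodd : ∀ n, Odd n → padicValRat p (b n) < 0) (n : ℕ) :
    padicValRat p (b n) + padicValRat p (b (n + 1)) < 0 := by
  rcases Nat.even_or_odd n with hn | hn
  · linarith [hle n, hodd (n + 1) hn.add_one]
  · linarith [hodd n hn, hle (n + 1)]

theorem cfA_ne_zero_and_padicValRat [Fact p.Prime] (hbne : ∀ n, b n ≠ 0)
    (hle : ∀ n, padicValRat p (b n) ≤ 0) (hodd : ∀ n, Odd n → padicValRat p (b n) < 0)
    (n : ℕ) :
    cfA b n ≠ 0 ∧ padicValRat p (cfA b n) = ∑ i ∈ Finset.range (n + 1), padicValRat p (b i) := by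
  induction n using Nat.twoStepInduction with
  | zero => simp [cfA, hbne 0]
  | one =>
    have hdom : padicValRat p (b 1 * b 0) < padicValRat p 1 := by
      rw [padicValRat.mul (hbne 1) (hbne 0), padicValRat.one]
      linarith [padicValRat_add_succ_neg hle hodd 0]
    obtain ⟨hne, hval⟩ := padicValRat.mul_add_of_lt (hbne 1) (hbne 0) one_ne_zero hdom
    refine ⟨hne, ?_⟩
    rw [cfA, hval, Finset.sum_range_succ, Finset.sum_range_one, add_comm]
  | more n ih₀ ih₁ =>
    have hdom : padicValRat p (b (n + 2) * cfA b (n + 1)) < padicValRat p (cfA b n) := by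
      rw [padicValRat.mul (hbne (n + 2)) ih₁.1, ih₁.2, ih₀.2, Finset.sum_range_succ]
      linarith [padicValRat_add_succ_neg hle hodd (n + 1)]
    obtain ⟨hne, hval⟩ := padicValRat.mul_add_of_lt (hbne (n + 2)) ih₁.1 ih₀.1 hdom
    refine ⟨hne, ?_⟩
    rw [cfA, hval, ih₁.2, Finset.sum_range_succ _ (n + 2), add_comm]

end Convergents

theorem valuation_convergents_general (p : ℕ) [Fact p.Prime] (b : ℕ → ℚ)
    (hbne : ∀ n, b n ≠ 0)
    (hrec : ∀ n, padicValRat p (b (n + 2) * cfB b (n + 1)) < padicValRat p (cfB b n))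
    (hle : ∀ n, padicValRat p (b n) ≤ 0)
    (hodd : ∀ n, Odd n → padicValRat p (b n) < 0) :
    ∀ n, 1 ≤ n →
      padicValRat p (cfA b n) = ∑ i ∈ Finset.range (n + 1), padicValRat p (b i) ∧
      padicValRat p (cfB b n) = ∑ i ∈ Finset.Icc 1 n, padicValRat p (b i) :=
  fun n _ => ⟨(cfA_ne_zero_and_padicValRat hbne hle hodd n).2,
    (cfB_ne_zero_and_padicValRat hbne hrec n).2⟩

/-- If the partial quotients satisfy `v_p(b_{n+2} B_{n+1}) < v_p(B_n)`, `v_p(b_n) ≤ 0` for all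
`n` and `v_p(b_n) < 0` for odd `n`, then for all `n ≥ 1`,
`v_p(A_n) = v_p(b_0) + ⋯ + v_p(b_n)` and `v_p(B_n) = v_p(b_1) + ⋯ + v_p(b_n)`. -/
theorem valuation_convergents (p : ℕ) [Fact p.Prime] (hp : Odd p) (b : ℕ → ℚ)
    (hbne : ∀ n, b n ≠ 0)
    (hrec : ∀ n, padicValRat p (b (n + 2) * cfB b (n + 1)) < padicValRat p (cfB b n))
    (hle : ∀ n, padicValRat p (b n) ≤ 0)
    (hodd : ∀ n, Odd n → padicValRat p (b n) < 0) :
    ∀ n, 1 ≤ n →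
      padicValRat p (cfA b n) = ∑ i ∈ Finset.range (n + 1), padicValRat p (b i) ∧
      padicValRat p (cfB b n) = ∑ i ∈ Finset.Icc 1 n, padicValRat p (b i) :=
  valuation_convergents_general p b hbne hrec hle hodd
end

section
/- Let α ∈ ℚ_p be a quadratic irrational with satisfies a purely periodic continued fraction of even period k, so that B_{k-1} α² + (B_{k-2} − A_{k-1}) α − A_{k-2} = 0, where the partial quotients b_0, ..., b_{k-1} satisfy v_p(b_n) = 0 for n even and v_p(b_n) < 0 for n odd. Then |α ᾱ|_p = |b_0|_p / |b_{k-1}|_p, and consequently |ᾱ|_p = 1/|b_{k-1}|_p · |b_0|_p/|α|_p. -/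
/-- If `α, ᾱ ∈ ℚ_p` are the roots of `B_{k-1} x² + (B_{k-2} - A_{k-1}) x - A_{k-2}` coming
from a purely periodic expansion `[b_0, …, b_{k-1}]` of even period `k`, with
`|A_n|_p = |b_0|_p ⋯ |b_n|_p`, `|B_n|_p = |b_1|_p ⋯ |b_n|_p`, `v_p(b_n) = 0` for `n` even and
`v_p(b_n) < 0` for `n` odd, then `|α ᾱ|_p = |b_0|_p / |b_{k-1}|_p`, and consequently
`|ᾱ|_p = (1 / |b_{k-1}|_p) ⬝ (|b_0|_p / |α|_p)`. -/
theorem norm_mul_conj_eq (p : ℕ) [Fact p.Prime] (hp : Odd p) (b : ℕ → ℚ)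
    (k : ℕ) (hk : 2 ≤ k) (hkeven : Even k)
    (hA : ∀ n, padicNorm p (cfA b n) = ∏ i ∈ Finset.range (n + 1), padicNorm p (b i))
    (hB : ∀ n, padicNorm p (cfB b n) = ∏ i ∈ Finset.Icc 1 n, padicNorm p (b i))
    (hbeven : ∀ n, Even n → padicValRat p (b n) = 0)
    (hbodd : ∀ n, Odd n → padicValRat p (b n) < 0)
    (α conj : ℚ_[p]) (hne : α ≠ conj)
    (hroot : (cfB b (k - 1) : ℚ_[p]) * α ^ 2 +
        ((cfB b (k - 2) - cfA b (k - 1) : ℚ) : ℚ_[p]) * α - (cfA b (k - 2) : ℚ_[p]) = 0)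
    (hroot' : (cfB b (k - 1) : ℚ_[p]) * conj ^ 2 +
        ((cfB b (k - 2) - cfA b (k - 1) : ℚ) : ℚ_[p]) * conj - (cfA b (k - 2) : ℚ_[p]) = 0) :
    ‖α * conj‖ = (padicNorm p (b 0) : ℝ) / (padicNorm p (b (k - 1)) : ℝ) ∧
      ‖conj‖ = (1 / (padicNorm p (b (k - 1)) : ℝ)) * ((padicNorm p (b 0) : ℝ) / ‖α‖) := by
  -- every partial quotient is nonzero (in padicNorm terms)
  have key : ∀ n, padicNorm p (b n) ≠ 0 := by
    intro n
    induction n using Nat.strong_induction_on with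
    | _ n ih =>
      rcases Nat.even_or_odd n with he | ho
      · match n, he with
        | 0, _ =>
          intro h0
          have hb0 : b 0 = 0 := padicNorm.zero_of_padicNorm_eq_zero h0
          have h1 := hA 1
          simp [cfA, hb0, Finset.prod_range_succ, padicNorm.one] at h1
        | 1, he => exact absurd he (by decide)
        | (m+2), he =>
          intro h0
          have hb : b (m+2) = 0 := padicNorm.zero_of_padicNorm_eq_zero h0
          have heq : cfA b (m+2) = cfA b m := by simp [cfA, hb]
          have h2 := hA (m+2)
          rw [heq, hA m] at h2
          have hz : (∏ i ∈ Finset.range (m + 3), padicNorm p (b i)) = 0 := by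
            apply Finset.prod_eq_zero (i := m+2) (by simp) h0
          rw [hz] at h2
          have : ∃ i ∈ Finset.range (m + 1), padicNorm p (b i) = 0 :=
            Finset.prod_eq_zero_iff.mp h2
          obtain ⟨i, hi, hi0⟩ := this
          exact ih i (by simp at hi; omega) hi0
      · intro h0
        have hb : b n = 0 := padicNorm.zero_of_padicNorm_eq_zero h0
        have := hbodd n ho
        rw [hb] at this
        simp at this
  obtain ⟨m, rfl⟩ : ∃ m, k = m + 2 := ⟨k - 2, by omega⟩
  have hA' := hA m
  have hB' := hB (m+1)
  have hprodA : padicNorm p (cfA b m)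
      = padicNorm p (b 0) * ∏ i ∈ Finset.Icc 1 m, padicNorm p (b i) := by
    rw [hA', Finset.range_eq_Ico, Finset.prod_eq_prod_Ico_succ_bot (by omega),
      Finset.Ico_add_one_right_eq_Icc]
  have hprodB : padicNorm p (cfB b (m+1))
      = (∏ i ∈ Finset.Icc 1 m, padicNorm p (b i)) * padicNorm p (b (m+1)) := by
    rw [hB', Finset.prod_Icc_succ_top (by omega)]
  have hPne : (∏ i ∈ Finset.Icc 1 m, padicNorm p (b i)) ≠ 0 :=
    Finset.prod_ne_zero_iff.mpr fun i _ => key i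
  have hAne : cfA b m ≠ 0 := by
    intro h
    rw [h, padicNorm.zero] at hprodA
    exact key 0 (by
      rcases mul_eq_zero.mp hprodA.symm with h' | h'
      · exact h'
      · exact absurd h' hPne)
  have hBneQ : cfB b (m+1) ≠ 0 := by
    intro h
    rw [h, padicNorm.zero] at hprodB
    rcases mul_eq_zero.mp hprodB.symm with h' | h'
    · exact hPne h'
    · exact key (m+1) h'
  -- work in Q_p
  have hBp : ((cfB b (m+1) : ℚ) : ℚ_[p]) ≠ 0 := by exact_mod_cast hBneQ
  have hAp : ((cfA b m : ℚ) : ℚ_[p]) ≠ 0 := by exact_mod_cast hAne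
  have hred1 : m + 2 - 1 = m + 1 := rfl
  have hred2 : m + 2 - 2 = m := rfl
  rw [hred1, hred2] at hroot hroot'
  set Bp : ℚ_[p] := ((cfB b (m+1) : ℚ) : ℚ_[p]) with hBpdef
  set cp : ℚ_[p] := ((cfB b m - cfA b (m+1) : ℚ) : ℚ_[p]) with hcpdef
  set Ap : ℚ_[p] := ((cfA b m : ℚ) : ℚ_[p]) with hApdef
  have hfac : (α - conj) * (Bp * (α + conj) + cp) = 0 := by
    linear_combination hroot - hroot'
  have hsum : Bp * (α + conj) + cp = 0 :=
    (mul_eq_zero.mp hfac).resolve_left (sub_ne_zero.mpr hne)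
  have hprod : Bp * (α * conj) = -Ap := by
    linear_combination α * hsum - hroot
  have hαconj : α * conj = -Ap / Bp := by
    field_simp
    linear_combination hprod
  -- norms
  have hnormA : ‖Ap‖ = (padicNorm p (cfA b m) : ℝ) := Padic.eq_padicNorm _
  have hnormB : ‖Bp‖ = (padicNorm p (cfB b (m+1)) : ℝ) := Padic.eq_padicNorm _
  have hratioQ : padicNorm p (cfA b m) / padicNorm p (cfB b (m+1))
      = padicNorm p (b 0) / padicNorm p (b (m+1)) := by
    rw [hprodA, hprodB, mul_comm (∏ i ∈ Finset.Icc 1 m, padicNorm p (b i))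
      (padicNorm p (b (m+1)))]
    exact mul_div_mul_right _ _ hPne
  have hratio : (padicNorm p (cfA b m) : ℝ) / (padicNorm p (cfB b (m+1)) : ℝ)
      = (padicNorm p (b 0) : ℝ) / (padicNorm p (b (m+1)) : ℝ) := by
    exact_mod_cast congrArg (Rat.cast : ℚ → ℝ) hratioQ
  have hmain : ‖α * conj‖ = (padicNorm p (b 0) : ℝ) / (padicNorm p (b (m+1)) : ℝ) := by
    rw [hαconj, norm_div, norm_neg, hnormA, hnormB, hratio]
  refine ⟨hmain, ?_⟩
  have hα0 : α ≠ 0 := by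
    intro h
    rw [h] at hroot
    simp at hroot
    exact hAp hroot
  have hα0' : ‖α‖ ≠ 0 := norm_ne_zero_iff.mpr hα0
  have hbk : (padicNorm p (b (m+1)) : ℝ) ≠ 0 := by exact_mod_cast key (m+1)
  have : ‖α‖ * ‖conj‖ = (padicNorm p (b 0) : ℝ) / (padicNorm p (b (m+1)) : ℝ) := by
    rw [← norm_mul]; exact hmain
  rw [hred1]
  field_simp at this ⊢
  linarith [this]
end

section
/- Suppose α ∈ ℚ_p is a quadratic irrational with |α|_p = 1 and |ᾱ|_p < 1, whose Browkin II expansion is eventually periodic with preperiod length h and period length k. Then along the orbit of conjugates ᾱ_n = 1/(ᾱ_{n-1} − b_{n-1}): v_p(ᾱ_{2j}) > 0 and v_p(ᾱ_{2j+1}) = 0 for all j ≥ 0. -/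
private lemma pv_inv {p : ℕ} [Fact p.Prime] {x : ℚ_[p]} (hx : x ≠ 0) :
    (x⁻¹).valuation = -x.valuation := by
  have h1 : x * x⁻¹ = 1 := mul_inv_cancel₀ hx
  have := Padic.valuation_mul hx (inv_ne_zero hx)
  rw [h1, Padic.valuation_one] at this
  omega

private lemma pv_norm_lt_one {p : ℕ} [Fact p.Prime] {x : ℚ_[p]} (hx : x ≠ 0) :
    ‖x‖ < 1 ↔ 0 < x.valuation := by
  have hp1 : (1:ℝ) < p := by exact_mod_cast (Fact.out : p.Prime).one_lt
  rw [Padic.norm_eq_zpow_neg_valuation hx]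
  rw [show (1:ℝ) = (p:ℝ) ^ (0:ℤ) by simp]
  rw [zpow_lt_zpow_iff_right₀ hp1]
  omega

private lemma pv_norm_eq_one {p : ℕ} [Fact p.Prime] {x : ℚ_[p]} (hx : x ≠ 0) :
    ‖x‖ = 1 ↔ x.valuation = 0 := by
  have hp1 : (1:ℝ) < p := by exact_mod_cast (Fact.out : p.Prime).one_lt
  rw [Padic.norm_eq_zpow_neg_valuation hx]
  rw [zpow_eq_one_iff_right₀ (by linarith) (by linarith)]
  omega

private lemma pv_norm_gt_one {p : ℕ} [Fact p.Prime] {x : ℚ_[p]} (hx : x ≠ 0) :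
    1 < ‖x‖ ↔ x.valuation < 0 := by
  have hp1 : (1:ℝ) < p := by exact_mod_cast (Fact.out : p.Prime).one_lt
  rw [Padic.norm_eq_zpow_neg_valuation hx]
  rw [show (1:ℝ) = (p:ℝ) ^ (0:ℤ) by simp]
  rw [zpow_lt_zpow_iff_right₀ hp1]
  omega

/-- If `α ∈ ℚ_p` is a quadratic irrational with `|α|_p = 1`, `|ᾱ|_p < 1`, whose Browkin II
expansion is eventually periodic (preperiod `h`, period `k`), then the conjugate orbit
`ᾱ_{n+1} = 1/(ᾱ_n - b_n)` satisfies `v_p(ᾱ_{2j}) > 0` and `v_p(ᾱ_{2j+1}) = 0` for all `j`. -/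
theorem conj_orbit_valuations (p : ℕ) [Fact p.Prime] (hp : Odd p)
    (α conj : ℚ_[p]) (qa qb qc : ℚ) (hqa : qa ≠ 0)
    (hroot : (qa : ℚ_[p]) * α ^ 2 + (qb : ℚ_[p]) * α + (qc : ℚ_[p]) = 0)
    (hroot' : (qa : ℚ_[p]) * conj ^ 2 + (qb : ℚ_[p]) * conj + (qc : ℚ_[p]) = 0)
    (hne : α ≠ conj) (hirr : ∀ q : ℚ, α ≠ (q : ℚ_[p]))
    (hα : ‖α‖ = 1) (hconj : ‖conj‖ < 1)
    (b : ℕ → ℚ) (αs cs : ℕ → ℚ_[p])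
    (hα0 : αs 0 = α) (hc0 : cs 0 = conj)
    (hrec : ∀ n, αs (n + 1) = (αs n - (b n : ℚ_[p]))⁻¹)
    (hcrec : ∀ n, cs (n + 1) = (cs n - (b n : ℚ_[p]))⁻¹)
    (hbeven : ∀ n, Even n → padicValRat p (b n) = 0)
    (hbodd : ∀ n, Odd n → padicValRat p (b n) < 0)
    (hse : ∀ n, Even n → 0 < (αs n - (b n : ℚ_[p])).valuation)
    (hso : ∀ n, Odd n → (αs n - (b n : ℚ_[p])).valuation = 0)
    (h k : ℕ) (hk : 0 < k) (hkeven : Even k)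
    (hper : ∀ n, h ≤ n → αs (n + k) = αs n) :
    ∀ j : ℕ, 0 < (cs (2 * j)).valuation ∧ (cs (2 * j + 1)).valuation = 0 := by
  have hαne : α ≠ 0 := by intro h0; rw [h0, norm_zero] at hα; norm_num at hα
  -- conj ≠ 0
  have hconjne : conj ≠ 0 := by
    intro h0
    rw [h0] at hroot'
    have hqc : (qc : ℚ_[p]) = 0 := by simpa using hroot'
    have hqa' : (qa : ℚ_[p]) ≠ 0 := by exact_mod_cast hqa
    have hfac : α * ((qa : ℚ_[p]) * α + qb) = 0 := by
      rw [hqc] at hroot; linear_combination hroot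
    rcases mul_eq_zero.mp hfac with h1 | h1
    · exact hαne h1
    · apply hirr (-qb / qa)
      have : (qa : ℚ_[p]) * α = -qb := by linear_combination h1
      push_cast
      field_simp
      linear_combination this
  -- valuations of αs at even indices are 0
  have vα0 : ∀ j : ℕ, (αs (2 * j)).valuation = 0 := by
    intro j
    cases j with
    | zero => rw [show 2*0 = 0 by rfl, hα0]; exact (pv_norm_eq_one hαne).mp hα
    | succ j =>
      rw [show 2 * (j+1) = (2*j+1) + 1 by ring, hrec]
      by_cases hz : αs (2*j+1) - (b (2*j+1) : ℚ_[p]) = 0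
      · rw [hz, inv_zero, Padic.valuation_zero]
      · rw [pv_inv hz, hso (2*j+1) ⟨j, by ring⟩]; ring
  -- b at even indices is nonzero
  have bne : ∀ n : ℕ, Even n → b n ≠ 0 := by
    rintro n ⟨j, rfl⟩ hb
    have h1 := hse (j + j) ⟨j, rfl⟩
    rw [hb] at h1
    simp only [Rat.cast_zero, sub_zero] at h1
    rw [show j + j = 2 * j by ring, vα0 j] at h1
    exact lt_irrefl 0 h1
  have bnz_odd : ∀ n : ℕ, Odd n → b n ≠ 0 := by
    intro n hn hb
    have := hbodd n hn
    rw [hb, padicValRat.zero] at this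
    exact lt_irrefl 0 this
  -- norms of b
  have hbnorm_even : ∀ n : ℕ, Even n → ‖(b n : ℚ_[p])‖ = 1 := by
    intro n hn
    have hne' : (b n : ℚ_[p]) ≠ 0 := by exact_mod_cast bne n hn
    rw [pv_norm_eq_one hne', Padic.valuation_ratCast]
    exact hbeven n hn
  have hbnorm_odd : ∀ n : ℕ, Odd n → 1 < ‖(b n : ℚ_[p])‖ := by
    intro n hn
    have hne' : (b n : ℚ_[p]) ≠ 0 := by exact_mod_cast bnz_odd n hn
    rw [pv_norm_gt_one hne', Padic.valuation_ratCast]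
    exact hbodd n hn
  -- main induction
  have main : ∀ j : ℕ, (cs (2*j) ≠ 0 ∧ 0 < (cs (2*j)).valuation) ∧
      (cs (2*j+1) ≠ 0 ∧ (cs (2*j+1)).valuation = 0) := by
    intro j
    induction j with
    | zero =>
      have h00 : cs 0 ≠ 0 := by rw [hc0]; exact hconjne
      have hv0 : 0 < (cs 0).valuation := by
        rw [hc0]; exact (pv_norm_lt_one hconjne).mp hconj
      refine ⟨⟨h00, hv0⟩, ?_⟩
      -- cs 1 = (cs 0 - b 0)⁻¹
      have hcsnorm : ‖cs 0‖ < 1 := (pv_norm_lt_one h00).mpr hv0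
      have hbn : ‖(b 0 : ℚ_[p])‖ = 1 := hbnorm_even 0 ⟨0, rfl⟩
      have hsub : ‖cs 0 - (b 0 : ℚ_[p])‖ = 1 := by
        rw [sub_eq_add_neg, Padic.add_eq_max_of_ne (by rw [norm_neg, hbn]; linarith)]
        rw [norm_neg, hbn]
        exact max_eq_right hcsnorm.le
      have hsubne : cs 0 - (b 0 : ℚ_[p]) ≠ 0 := by
        intro hz; rw [hz, norm_zero] at hsub; norm_num at hsub
      rw [show 2*0+1 = 0+1 from rfl, hcrec 0]
      refine ⟨inv_ne_zero hsubne, ?_⟩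
      rw [pv_inv hsubne, (pv_norm_eq_one hsubne).mp hsub]; ring
    | succ j ih =>
      obtain ⟨_, h1ne, h1v⟩ := ih
      -- step from odd 2j+1 to even 2j+2
      have hcsnorm : ‖cs (2*j+1)‖ = 1 := (pv_norm_eq_one h1ne).mpr h1v
      have hbn : 1 < ‖(b (2*j+1) : ℚ_[p])‖ := hbnorm_odd (2*j+1) ⟨j, by ring⟩
      have hsub : 1 < ‖cs (2*j+1) - (b (2*j+1) : ℚ_[p])‖ := by
        rw [sub_eq_add_neg, Padic.add_eq_max_of_ne (by rw [norm_neg, hcsnorm]; linarith)]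
        rw [norm_neg, hcsnorm]
        exact lt_max_of_lt_right hbn
      have hsubne : cs (2*j+1) - (b (2*j+1) : ℚ_[p]) ≠ 0 := by
        intro hz; rw [hz, norm_zero] at hsub; norm_num at hsub
      have heq : cs (2*(j+1)) = (cs (2*j+1) - (b (2*j+1) : ℚ_[p]))⁻¹ := by
        rw [show 2*(j+1) = (2*j+1)+1 by ring, hcrec]
      have h2ne : cs (2*(j+1)) ≠ 0 := by rw [heq]; exact inv_ne_zero hsubne
      have h2v : 0 < (cs (2*(j+1))).valuation := by
        rw [heq, pv_inv hsubne]
        have := (pv_norm_gt_one hsubne).mp hsub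
        omega
      refine ⟨⟨h2ne, h2v⟩, ?_⟩
      -- step from even 2(j+1) to odd
      have hcsnorm2 : ‖cs (2*(j+1))‖ < 1 := (pv_norm_lt_one h2ne).mpr h2v
      have hbn2 : ‖(b (2*(j+1)) : ℚ_[p])‖ = 1 := hbnorm_even (2*(j+1)) ⟨j+1, by ring⟩
      have hsub2 : ‖cs (2*(j+1)) - (b (2*(j+1)) : ℚ_[p])‖ = 1 := by
        rw [sub_eq_add_neg, Padic.add_eq_max_of_ne (by rw [norm_neg, hbn2]; linarith)]
        rw [norm_neg, hbn2]
        exact max_eq_right hcsnorm2.le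
      have hsubne2 : cs (2*(j+1)) - (b (2*(j+1)) : ℚ_[p]) ≠ 0 := by
        intro hz; rw [hz, norm_zero] at hsub2; norm_num at hsub2
      rw [hcrec (2*(j+1))]
      exact ⟨inv_ne_zero hsubne2, by rw [pv_inv hsubne2, (pv_norm_eq_one hsubne2).mp hsub2]; ring⟩
  intro j
  exact ⟨(main j).1.2, (main j).2.2⟩
end

section
/- Suppose α ∈ ℚ_p is a quadratic irrational with |α|_p = 1 and |ᾱ|_p < 1 whose Browkin II expansion is eventually periodic: α = [b_0, ..., b_{h-1}, overline{b_h, ..., b_{h+k-1}}] with minimal preperiod length h. Then h is not odd (the preperiod length cannot be odd). -/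
/-- `J_p = ℤ[1/p] ∩ (-p/2, p/2)` as a subset of `ℚ`. -/
def Jp (p : ℕ) : Set ℚ :=
  {q | (∃ (z : ℤ) (n : ℕ), q = (z : ℚ) / (p : ℚ) ^ n) ∧ -((p : ℚ) / 2) < q ∧ q < (p : ℚ) / 2}

section Aux

variable {p : ℕ} [hpf : Fact p.Prime]

private lemma one_lt_p_real : (1 : ℝ) < (p : ℝ) := by exact_mod_cast hpf.out.one_lt

/-- If a rational has positive `p`-adic valuation and denominator a power of `p`,
it is `p` times an integer. -/
private lemma exists_int_of_val_pos {d : ℚ} (hd0 : d ≠ 0) (hv : 0 < padicValRat p d)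
    (z : ℤ) (n : ℕ) (hrep : d = (z : ℚ) / (p : ℚ) ^ n) : ∃ t : ℤ, d = (p : ℚ) * t := by
  have hp0 : (p : ℚ) ≠ 0 := by exact_mod_cast hpf.out.ne_zero
  set e : ℚ := d / p with he
  have he0 : e ≠ 0 := div_ne_zero hd0 hp0
  have hval_e : 0 ≤ padicValRat p e := by
    rw [he, padicValRat.div hd0 hp0, padicValRat.self hpf.out.one_lt]
    omega
  -- e = z / p^(n+1)
  have herep : e = (z : ℚ) / ((p : ℤ) ^ (n + 1) : ℤ) := by
    rw [he, hrep]
    push_cast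
    rw [pow_succ]
    ring
  have hden_dvd : (e.den : ℤ) ∣ (p : ℤ) ^ (n + 1) := by
    rw [herep, ← Rat.divInt_eq_div]
    exact Rat.den_dvd _ _
  have hden_dvd' : e.den ∣ p ^ (n + 1) := by
    have h2 := Int.natCast_dvd_natCast.mp (by push_cast at hden_dvd ⊢; exact hden_dvd : ((e.den : ℤ)) ∣ ((p ^ (n+1) : ℕ) : ℤ))
    exact h2
  -- p does not divide e.den
  have hpden : ¬ p ∣ e.den := by
    intro hdvd
    have hnum : ¬ (p : ℤ) ∣ e.num := by
      intro hnumdvd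
      have hcop := e.reduced
      have hdg : (p : ℕ) ∣ Nat.gcd e.num.natAbs e.den :=
        Nat.dvd_gcd (Int.natCast_dvd.mp hnumdvd) hdvd
      rw [hcop] at hdg
      have := Nat.le_of_dvd one_pos hdg
      have := hpf.out.two_le
      omega
    have hv1 : padicValInt p e.num = 0 := padicValInt.eq_zero_of_not_dvd hnum
    have hv2 : 1 ≤ padicValNat p e.den :=
      one_le_padicValNat_of_dvd e.pos.ne' hdvd
    rw [padicValRat_def, hv1] at hval_e
    omega
  have hcop : Nat.Coprime e.den (p ^ (n + 1)) :=
    (Nat.Prime.coprime_iff_not_dvd hpf.out).mpr hpden |>.symm.pow_right _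
  have hden1 : e.den = 1 := hcop.eq_one_of_dvd hden_dvd'
  refine ⟨e.num, ?_⟩
  have : e = (e.num : ℚ) := by
    conv_lhs => rw [← Rat.num_div_den e]
    rw [hden1]; simp
  rw [he] at this
  field_simp at this
  rw [this]

/-- Distinct elements of `J_p` differ by something of `p`-adic norm `≥ 1`. -/
private lemma Jp_eq_of_norm_lt_one {a c : ℚ} (ha : a ∈ Jp p) (hc : c ∈ Jp p)
    (hlt : ‖((a - c : ℚ) : ℚ_[p])‖ < 1) : a = c := by
  by_contra hne
  have hd0 : a - c ≠ 0 := sub_ne_zero.mpr hne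
  obtain ⟨⟨z1, n1, hz1⟩, ha1, ha2⟩ := ha
  obtain ⟨⟨z2, n2, hz2⟩, hc1, hc2⟩ := hc
  have hp0 : (p : ℚ) ≠ 0 := by exact_mod_cast hpf.out.ne_zero
  -- positive valuation
  have hv : 0 < padicValRat p (a - c) := by
    by_contra hv
    push_neg at hv
    rw [Padic.eq_padicNorm, padicNorm.eq_zpow_of_nonzero hd0] at hlt
    have h1 : ((1 : ℚ) : ℝ) ≤ (((p : ℚ) ^ (-padicValRat p (a - c)) : ℚ) : ℝ) := by
      push_cast
      calc (1 : ℝ) = (p : ℝ) ^ (0 : ℤ) := by simp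
        _ ≤ (p : ℝ) ^ (-padicValRat p (a - c)) := by
            rw [zpow_le_zpow_iff_right₀ one_lt_p_real]; omega
    rw [Rat.cast_one] at h1
    linarith
  -- representation of a - c
  have hrep : a - c = ((z1 * (p : ℤ) ^ n2 - z2 * (p : ℤ) ^ n1 : ℤ) : ℚ) / (p : ℚ) ^ (n1 + n2) := by
    rw [hz1, hz2]
    push_cast
    rw [pow_add]
    field_simp
  obtain ⟨t, ht⟩ := exists_int_of_val_pos hd0 hv _ _ hrep
  have ht0 : t ≠ 0 := by
    intro h0; rw [h0] at ht; simp at ht; exact hd0 ht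
  have habs : (1 : ℚ) ≤ |(t : ℚ)| := by
    rw [← Int.cast_abs]
    exact_mod_cast Int.one_le_abs (by exact_mod_cast ht0)
  have hppos : (0 : ℚ) < p := by exact_mod_cast hpf.out.pos
  have hbig : (p : ℚ) ≤ |a - c| := by
    rw [ht, abs_mul, abs_of_pos hppos]
    nlinarith [abs_nonneg ((t : ℚ))]
  have hsmall : |a - c| < (p : ℚ) := by
    rw [abs_lt]; constructor <;> linarith
  linarith

end Aux

/-- If `α ∈ ℚ_p` is a quadratic irrational with `|α|_p = 1` and `|ᾱ|_p < 1` whose Browkin II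
expansion is eventually periodic with minimal preperiod length `h` and period length `k`,
then `h` cannot be odd. -/
theorem browkinII_preperiod_not_odd (p : ℕ) [Fact p.Prime] (hp : Odd p)
    (α conj : ℚ_[p]) (qa qb qc : ℚ) (hqa : qa ≠ 0)
    (hroot : (qa : ℚ_[p]) * α ^ 2 + (qb : ℚ_[p]) * α + (qc : ℚ_[p]) = 0)
    (hroot' : (qa : ℚ_[p]) * conj ^ 2 + (qb : ℚ_[p]) * conj + (qc : ℚ_[p]) = 0)
    (hne : α ≠ conj) (hirr : ∀ q : ℚ, α ≠ (q : ℚ_[p]))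
    (hα : ‖α‖ = 1) (hconj : ‖conj‖ < 1)
    (b : ℕ → ℚ) (αs cs : ℕ → ℚ_[p])
    (hα0 : αs 0 = α) (hc0 : cs 0 = conj)
    (hrec : ∀ n, αs (n + 1) = (αs n - (b n : ℚ_[p]))⁻¹)
    (hcrec : ∀ n, cs (n + 1) = (cs n - (b n : ℚ_[p]))⁻¹)
    (hcne : ∀ n, cs n - (b n : ℚ_[p]) ≠ 0)
    (hJ : ∀ n, Even n → b n ∈ Jp p)
    (hbeven : ∀ n, Even n → padicValRat p (b n) = 0)
    (hbodd : ∀ n, Odd n → padicValRat p (b n) < 0)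
    (hse : ∀ n, Even n → 0 < (αs n - (b n : ℚ_[p])).valuation)
    (hso : ∀ n, Odd n → (αs n - (b n : ℚ_[p])).valuation = 0)
    (h k : ℕ) (hk : 0 < k) (hkeven : Even k)
    (hper : αs (h + k) = αs h) (hcper : cs (h + k) = cs h)
    (hbper : ∀ n, h ≤ n → b (n + k) = b n)
    (hmin : ∀ h' < h, αs (h' + k) ≠ αs h') :
    ¬ Odd h := by
  have hp1 : (1 : ℝ) < (p : ℝ) := one_lt_p_real
  -- every complete quotient is irrational
  have hirrs : ∀ n, ∀ q : ℚ, αs n ≠ (q : ℚ_[p]) := by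
    intro n
    induction n with
    | zero => simpa [hα0] using hirr
    | succ n ih =>
      intro q hq
      rw [hrec n] at hq
      have hx : αs n - ((b n : ℚ) : ℚ_[p]) = ((q : ℚ_[p]))⁻¹ := by
        rw [← hq, inv_inv]
      apply ih (b n + q⁻¹)
      push_cast
      linear_combination hx
  have hane : ∀ n, αs n - ((b n : ℚ) : ℚ_[p]) ≠ 0 := by
    intro n hz
    exact hirrs n (b n) (by rwa [sub_eq_zero] at hz)
  -- norms of αs n - b n
  have hnormse : ∀ n, Even n → ‖αs n - ((b n : ℚ) : ℚ_[p])‖ < 1 := by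
    intro n hn
    rw [Padic.norm_eq_zpow_neg_valuation (hane n)]
    exact zpow_lt_one_of_neg₀ hp1 (by have := hse n hn; omega)
  have hnormso : ∀ n, Odd n → ‖αs n - ((b n : ℚ) : ℚ_[p])‖ = 1 := by
    intro n hn
    rw [Padic.norm_eq_zpow_neg_valuation (hane n), hso n hn]
    simp
  -- norm of αs at even indices is 1
  have hαnorm : ∀ n, Even n → ‖αs n‖ = 1 := by
    intro n hn
    match n, hn with
    | 0, _ => rw [hα0]; exact hα
    | (m + 1), hn =>
      have hm : Odd m := by
        rw [Nat.even_iff] at hn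
        rw [Nat.odd_iff]
        omega
      rw [hrec m, norm_inv, hnormso m hm]
      simp
  -- b at even indices has norm 1
  have hbnorm1 : ∀ n, Even n → ‖((b n : ℚ) : ℚ_[p])‖ = 1 := by
    intro n hn
    by_contra hne'
    have h1 := hαnorm n hn
    have h2 := hnormse n hn
    have hmax : ‖αs n - ((b n : ℚ) : ℚ_[p])‖ = max ‖αs n‖ ‖((b n : ℚ) : ℚ_[p])‖ := by
      rw [sub_eq_add_neg, Padic.add_eq_max_of_ne (by rw [norm_neg, h1]; exact fun hh => hne' hh.symm), norm_neg]
    rw [hmax, h1] at h2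
    have := le_max_left (1 : ℝ) ‖((b n : ℚ) : ℚ_[p])‖
    linarith
  -- b at odd indices has norm > 1
  have hbnormo : ∀ n, Odd n → 1 < ‖((b n : ℚ) : ℚ_[p])‖ := by
    intro n hn
    have hb0 : b n ≠ 0 := by
      intro h0
      have := hbodd n hn
      rw [h0, padicValRat.zero] at this
      omega
    rw [Padic.eq_padicNorm, padicNorm.eq_zpow_of_nonzero hb0]
    push_cast
    exact one_lt_zpow₀ hp1 (by have := hbodd n hn; omega)
  -- norms of conjugates
  have hcsnorm : ∀ n, (Even n → ‖cs n‖ < 1) ∧ (Odd n → ‖cs n‖ = 1) := by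
    intro n
    induction n with
    | zero =>
      exact ⟨fun _ => by rw [hc0]; exact hconj, fun ho => absurd ho (by simp)⟩
    | succ n ih =>
      constructor
      · intro he
        have hn : Odd n := by
          rw [Nat.even_iff] at he
          rw [Nat.odd_iff]
          omega
        have h1 : ‖cs n‖ = 1 := ih.2 hn
        have h2 : 1 < ‖((b n : ℚ) : ℚ_[p])‖ := hbnormo n hn
        have hd : ‖cs n - ((b n : ℚ) : ℚ_[p])‖ = ‖((b n : ℚ) : ℚ_[p])‖ := by
          rw [sub_eq_add_neg,
            Padic.add_eq_max_of_ne (by rw [norm_neg, h1]; exact ne_of_lt h2),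
            norm_neg, h1, max_eq_right h2.le]
        rw [hcrec n, norm_inv, hd]
        rw [inv_lt_one_iff₀]
        right; exact h2
      · intro ho
        have hn : Even n := by
          rw [Nat.odd_iff] at ho
          rw [Nat.even_iff]
          omega
        have h1 : ‖cs n‖ < 1 := ih.1 hn
        have h2 : ‖((b n : ℚ) : ℚ_[p])‖ = 1 := hbnorm1 n hn
        have hd : ‖cs n - ((b n : ℚ) : ℚ_[p])‖ = 1 := by
          rw [sub_eq_add_neg,
            Padic.add_eq_max_of_ne (by rw [norm_neg, h2]; exact ne_of_lt h1),
            norm_neg, h2, max_eq_right h1.le]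
        rw [hcrec n, norm_inv, hd]
        simp
  -- main argument
  intro hodd
  obtain ⟨j, rfl⟩ := hodd
  set m := 2 * j with hm
  have hmeven : Even m := ⟨j, by omega⟩
  have hmkeven : Even (m + k) := hmeven.add hkeven
  -- shift the periodicity equations back one step
  have e1 : (αs (m + k) - ((b (m + k) : ℚ) : ℚ_[p]))⁻¹ = (αs m - ((b m : ℚ) : ℚ_[p]))⁻¹ := by
    rw [← hrec, ← hrec]
    have : m + k + 1 = 2 * j + 1 + k := by omega
    rw [this]
    exact hper
  have e1' : αs (m + k) - ((b (m + k) : ℚ) : ℚ_[p]) = αs m - ((b m : ℚ) : ℚ_[p]) :=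
    inv_injective e1
  have e2 : (cs (m + k) - ((b (m + k) : ℚ) : ℚ_[p]))⁻¹ = (cs m - ((b m : ℚ) : ℚ_[p]))⁻¹ := by
    rw [← hcrec, ← hcrec]
    have : m + k + 1 = 2 * j + 1 + k := by omega
    rw [this]
    exact hcper
  have e2' : cs (m + k) - ((b (m + k) : ℚ) : ℚ_[p]) = cs m - ((b m : ℚ) : ℚ_[p]) :=
    inv_injective e2
  -- the difference of the two partial quotients is small
  have hdiff : ((b (m + k) - b m : ℚ) : ℚ_[p]) = cs (m + k) - cs m := by
    push_cast
    linear_combination -e2'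
  have hnormdiff : ‖((b (m + k) - b m : ℚ) : ℚ_[p])‖ < 1 := by
    rw [hdiff, sub_eq_add_neg]
    calc ‖cs (m + k) + -(cs m)‖ ≤ max ‖cs (m + k)‖ ‖-(cs m)‖ := Padic.nonarchimedean _ _
      _ < 1 := by
          rw [norm_neg]
          exact max_lt ((hcsnorm (m + k)).1 hmkeven) ((hcsnorm m).1 hmeven)
  -- both are in J_p, so they are equal
  have hbeq : b (m + k) = b m :=
    Jp_eq_of_norm_lt_one (hJ (m + k) hmkeven) (hJ m hmeven) hnormdiff
  -- contradiction with minimality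
  apply hmin m (by omega)
  rw [hbeq] at e1'
  exact sub_left_injective e1'
end

section
/- Let p be an odd prime, t ≥ 2 an integer, and D = p²(1 − p^t)/(p − 1)². Then D(p−1)² = p²(1 − p^t), and the element β = [overline{−1, −2(p^{t-1}−1)/((p−1)p^{t-1}), −1, 2/p}] (the purely periodic tail) satisfies the quadratic equation derived from √D = [0, 1/p, β]: concretely, if x ∈ ℚ_p satisfies x = 1/(1/p + 1/β') for the fixed point β' of the period map, then x² = D. Equivalently: the value α ∈ ℚ_p of the continued fraction [0, 1/p, overline{−1, −2(p^{t-1}−1)/((p−1)p^{t-1}), −1, 2/p}] satisfies α² = p²(1 − p^t)/(1 − p)². -/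
/-- Let `p` be an odd prime, `t ≥ 2`, and let `β ∈ ℚ_p` be the fixed point of the period map
of the period `(-1, -2(p^{t-1}-1)/((p-1)p^{t-1}), -1, 2/p)`. Then the value
`α = 0 + 1/(1/p + 1/β)` of the continued fraction
`[0, 1/p, overline{-1, -2(p^{t-1}-1)/((p-1)p^{t-1}), -1, 2/p}]` satisfies
`α² = p²(1 - p^t)/(1 - p)²`. -/
theorem cf_period_four_value_sq (p : ℕ) [Fact p.Prime] (hp : Odd p)
    (t : ℕ) (ht : 2 ≤ t) (β : ℚ_[p])
    (c : ℚ_[p])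
    (hc : c = -2 * ((p : ℚ_[p]) ^ (t - 1) - 1) / (((p : ℚ_[p]) - 1) * (p : ℚ_[p]) ^ (t - 1)))
    (hβ0 : β ≠ 0)
    (hd1 : 2 / (p : ℚ_[p]) + β⁻¹ ≠ 0)
    (hd2 : (-1 : ℚ_[p]) + (2 / (p : ℚ_[p]) + β⁻¹)⁻¹ ≠ 0)
    (hd3 : c + ((-1 : ℚ_[p]) + (2 / (p : ℚ_[p]) + β⁻¹)⁻¹)⁻¹ ≠ 0)
    (hfix : β = -1 + (c + ((-1 : ℚ_[p]) + (2 / (p : ℚ_[p]) + β⁻¹)⁻¹)⁻¹)⁻¹)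
    (α : ℚ_[p]) (hd4 : ((p : ℚ_[p]))⁻¹ + β⁻¹ ≠ 0)
    (hα : α = (((p : ℚ_[p]))⁻¹ + β⁻¹)⁻¹) :
    α ^ 2 = (p : ℚ_[p]) ^ 2 * (1 - (p : ℚ_[p]) ^ t) / (1 - (p : ℚ_[p])) ^ 2 := by
  have hprime : p.Prime := Fact.out
  have hp0 : (p : ℚ_[p]) ≠ 0 := Nat.cast_ne_zero.mpr hprime.ne_zero
  have hp1 : (p : ℚ_[p]) - 1 ≠ 0 := sub_ne_zero.mpr (by exact_mod_cast hprime.ne_one)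
  have h1p : (1 : ℚ_[p]) - p ≠ 0 :=
    sub_ne_zero.mpr (Ne.symm (by exact_mod_cast hprime.ne_one))
  set q : ℚ_[p] := (p : ℚ_[p]) ^ (t - 1) with hqdef
  have hq0 : q ≠ 0 := pow_ne_zero _ hp0
  have hqt : (p : ℚ_[p]) ^ t = p * q := by
    rw [hqdef, ← pow_succ']
    congr 1
    omega
  -- step 1: 2/p + β⁻¹ as a fraction
  have e1 : 2 / (p : ℚ_[p]) + β⁻¹ = ((p : ℚ_[p]) + 2 * β) / ((p : ℚ_[p]) * β) := by
    field_simp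
    ring
  have hn1 : (p : ℚ_[p]) + 2 * β ≠ 0 := by
    intro h
    exact hd1 (by rw [e1, h, zero_div])
  have e1' : (2 / (p : ℚ_[p]) + β⁻¹)⁻¹ = ((p : ℚ_[p]) * β) / ((p : ℚ_[p]) + 2 * β) := by
    rw [e1, inv_div]
  -- step 2
  have e2 : (-1 : ℚ_[p]) + (2 / (p : ℚ_[p]) + β⁻¹)⁻¹
      = ((p : ℚ_[p]) * β - p - 2 * β) / ((p : ℚ_[p]) + 2 * β) := by
    rw [e1']
    rw [eq_div_iff hn1, add_mul, div_mul_cancel₀ _ hn1]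
    ring
  have hn2 : (p : ℚ_[p]) * β - p - 2 * β ≠ 0 := by
    intro h
    exact hd2 (by rw [e2, h, zero_div])
  have e2' : ((-1 : ℚ_[p]) + (2 / (p : ℚ_[p]) + β⁻¹)⁻¹)⁻¹
      = ((p : ℚ_[p]) + 2 * β) / ((p : ℚ_[p]) * β - p - 2 * β) := by
    rw [e2, inv_div]
  -- step 3
  have e3 : c + ((-1 : ℚ_[p]) + (2 / (p : ℚ_[p]) + β⁻¹)⁻¹)⁻¹
      = (2 * β * q + (p : ℚ_[p]) * q + 2 * β * p - 4 * β - 2 * p + (p : ℚ_[p]) ^ 2 * q)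
        / (((p : ℚ_[p]) - 1) * q * ((p : ℚ_[p]) * β - p - 2 * β)) := by
    rw [hc, e2']
    rw [div_add_div _ _ (mul_ne_zero hp1 hq0) hn2, div_eq_div_iff (mul_ne_zero (mul_ne_zero hp1 hq0) hn2) (mul_ne_zero (mul_ne_zero hp1 hq0) hn2)]
    ring
  have hn3 : 2 * β * q + (p : ℚ_[p]) * q + 2 * β * p - 4 * β - 2 * p + (p : ℚ_[p]) ^ 2 * q ≠ 0 := by
    intro h
    exact hd3 (by rw [e3, h, zero_div])
  -- fixed point equation cleared of denominators
  have key : ((p : ℚ_[p]) + q - 2) * β ^ 2 + 2 * ((p : ℚ_[p]) * q - 1) * β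
      + (p : ℚ_[p]) * ((p : ℚ_[p]) * q - 1) = 0 := by
    rw [e3, inv_div] at hfix
    have h5 : β + 1 = ((p : ℚ_[p]) - 1) * q * ((p : ℚ_[p]) * β - p - 2 * β)
        / (2 * β * q + (p : ℚ_[p]) * q + 2 * β * p - 4 * β - 2 * p + (p : ℚ_[p]) ^ 2 * q) := by
      linear_combination hfix
    rw [eq_div_iff hn3] at h5
    linear_combination h5 / 2
  -- conclude
  have e4 : α = (p : ℚ_[p]) * β / ((p : ℚ_[p]) + β) := by
    rw [hα]
    rw [show ((p : ℚ_[p]))⁻¹ + β⁻¹ = ((p : ℚ_[p]) + β) / ((p : ℚ_[p]) * β) by field_simp; ring,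
      inv_div]
  have hn4 : (p : ℚ_[p]) + β ≠ 0 := by
    intro h
    apply hd4
    rw [show ((p : ℚ_[p]))⁻¹ + β⁻¹ = ((p : ℚ_[p]) + β) / ((p : ℚ_[p]) * β) by field_simp; ring,
      h, zero_div]
  rw [e4, hqt, div_pow, div_eq_div_iff (pow_ne_zero 2 hn4) (pow_ne_zero 2 h1p)]
  linear_combination ((p : ℚ_[p]))^3 * key
end

section
/- Let p be an odd prime and t ≥ 1 odd. Write √D = p(1 + p + ... + p^{t-1}) + A p^{t+1} in ℚ_p for D = p²(1 − p^t)/(1 − p)² (assuming this square root exists), where A ∈ ℤ_p has expansion A = −(p−1)/2 + p − (p−1)/2 p² + p³ − ... − (p−1)/2 p^{t-1} + A' p^t. Then B := 1 − A + Ap satisfies v_p(B) = 0 and 1/B = 2 + C p^t for some C ∈ ℤ_p, i.e., v_p(1/B − 2) ≥ t. -/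
lemma sum_digits (m : ℤ) (k : ℕ) :
    2 * (∑ i ∈ Finset.range (2*k+1), (if Even i then -m else 1) * (2*m+1)^i) * ((2*m+1)-1)
      = -1 + 2*(2*m+1)^(2*k+1) - (2*m+1)^(2*k+2) := by
  induction k with
  | zero => simp; ring
  | succ k ih =>
      have h1 : 2*(k+1)+1 = (2*k+1) + 1 + 1 := by ring
      rw [h1, Finset.sum_range_succ, Finset.sum_range_succ]
      have he1 : ¬ Even (2*k+1) := by simp [Nat.even_iff]
      have he2 : Even (2*k+1+1) := by simp [Nat.even_iff]
      rw [if_neg he1, if_pos he2]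
      linear_combination ih

/-- Let `p` be an odd prime, `t ≥ 1` odd, and let `A ∈ ℤ_p` have expansion
`A = -(p-1)/2 + 1·p - (p-1)/2·p² + 1·p³ - ⋯ - (p-1)/2·p^{t-1} + A'·p^t`
(digit `-(p-1)/2` at even exponents and `1` at odd exponents below `t`). Then
`B := 1 - A + Ap = 1 + A(p-1)` satisfies `v_p(B) = 0` and `1/B = 2 + C p^t` for some
`C ∈ ℤ_p`. -/
theorem inv_B_eq_two_add (p : ℕ) [Fact p.Prime] (hp : Odd p)
    (t : ℕ) (ht : 1 ≤ t) (htodd : Odd t) (A A' : ℤ_[p])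
    (hA : A = (∑ i ∈ Finset.range t,
        (((if Even i then -(((p : ℤ) - 1) / 2) else 1) : ℤ) : ℤ_[p]) * (p : ℤ_[p]) ^ i)
      + A' * (p : ℤ_[p]) ^ t) :
    ((1 : ℤ_[p]) + A * ((p : ℤ_[p]) - 1)).valuation = 0 ∧
      ∃ C : ℤ_[p],
        (((1 : ℤ_[p]) + A * ((p : ℤ_[p]) - 1) : ℤ_[p]) : ℚ_[p])⁻¹ =
          2 + (C : ℚ_[p]) * (p : ℚ_[p]) ^ t := by
  obtain ⟨m, hm⟩ := hp
  obtain ⟨k, hk⟩ := htodd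
  have hpz : (p : ℤ) = 2 * m + 1 := by exact_mod_cast hm
  have hdig : ∀ i : ℕ, (((if Even i then -(((p : ℤ) - 1) / 2) else 1) : ℤ))
      = ((if Even i then -(m : ℤ) else 1) : ℤ) := by
    intro i
    have : ((p : ℤ) - 1) / 2 = m := by omega
    rw [this]
  have hpc : (p : ℤ_[p]) = 2 * (m : ℤ_[p]) + 1 := by exact_mod_cast congrArg (Nat.cast (R := ℤ_[p])) hm
  -- key identity
  have hcast := congrArg ((Int.cast : ℤ → ℤ_[p])) (sum_digits (m : ℤ) k)
  push_cast [apply_ite ((Int.cast : ℤ → ℤ_[p]))] at hcast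
  have key : 2 * (1 + A * ((p : ℤ_[p]) - 1))
      = 1 + (p : ℤ_[p]) ^ t * (2 - (p : ℤ_[p]) + 2 * A' * ((p : ℤ_[p]) - 1)) := by
    rw [hA]
    simp only [hdig]
    push_cast [apply_ite ((Int.cast : ℤ → ℤ_[p]))]
    rw [hk, hpc]
    linear_combination hcast
  set B : ℤ_[p] := 1 + A * ((p : ℤ_[p]) - 1) with hB
  set u : ℤ_[p] := 2 - (p : ℤ_[p]) + 2 * A' * ((p : ℤ_[p]) - 1) with hu
  have hp1 : (1 : ℝ) < (p : ℝ) := by exact_mod_cast (Fact.out : p.Prime).one_lt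
  have hplt : ‖(p : ℤ_[p]) ^ t * u‖ < 1 := by
    rw [norm_mul, norm_pow, PadicInt.norm_p]
    have h1 : ((p : ℝ)⁻¹) ^ t < 1 := by
      apply pow_lt_one₀ (by positivity) _ (by omega)
      rw [inv_lt_one_iff₀]; right; exact hp1
    have h2 : ‖u‖ ≤ 1 := u.norm_le_one
    have h3 : (0:ℝ) ≤ ((p : ℝ)⁻¹) ^ t := by positivity
    nlinarith [norm_nonneg u]
  have h2B : ‖(2 : ℤ_[p]) * B‖ = 1 := by
    rw [key]
    rw [show (1 : ℤ_[p]) + (p : ℤ_[p]) ^ t * u = 1 + ((p : ℤ_[p]) ^ t * u) from rfl]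
    rw [PadicInt.norm_add_eq_max_of_ne (by rw [norm_one]; exact (ne_of_lt hplt).symm),
      norm_one, max_eq_left (le_of_lt hplt)]
  have h2 : ‖(2 : ℤ_[p])‖ = 1 := by
    have hle := PadicInt.norm_le_one (2 : ℤ_[p])
    rcases lt_or_eq_of_le hle with h | h
    · exfalso
      have : ((p : ℤ)) ∣ 2 := by
        rw [← PadicInt.norm_int_lt_one_iff_dvd]
        simpa using h
      have h3 := Int.le_of_dvd (by norm_num) this
      have hp2 : 2 ≤ p := (Fact.out : p.Prime).two_le
      omega
    · exact h
  have hnormB : ‖B‖ = 1 := by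
    rw [norm_mul, h2, one_mul] at h2B
    exact h2B
  have hB0 : B ≠ 0 := by
    intro h
    rw [h, norm_zero] at hnormB
    norm_num at hnormB
  constructor
  · have hval := PadicInt.norm_eq_zpow_neg_valuation hB0
    rw [hnormB] at hval
    have h0 := (zpow_right_strictMono₀ hp1).injective
      (show (p : ℝ) ^ (-(B.valuation : ℤ)) = (p : ℝ) ^ (0 : ℤ) by rw [← hval]; simp)
    omega
  · refine ⟨-u * B.inv, ?_⟩
    have hb : B * B.inv = 1 := PadicInt.mul_inv hnormB
    have hbQ : (B : ℚ_[p]) * (B.inv : ℚ_[p]) = 1 := by exact_mod_cast congrArg _ hb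
    have keyQ : 2 * ((B : ℚ_[p])) = 1 + (p : ℚ_[p]) ^ t * ((u : ℚ_[p])) := by
      exact_mod_cast congrArg (PadicInt.Coe.ringHom (p := p)) key
    have h : (2 + ((-u * B.inv : ℤ_[p]) : ℚ_[p]) * (p : ℚ_[p]) ^ t) * (B : ℚ_[p]) = 1 := by
      push_cast
      linear_combination keyQ - (p : ℚ_[p]) ^ t * (u : ℚ_[p]) * hbQ
    exact (eq_inv_of_mul_eq_one_left h).symm
end

section
/- Let p be an odd prime and suppose α ∈ ℚ_p has an eventually periodic Browkin II expansion with preperiod length h odd and period length k. If α_{h} = α_{h+k} (equality of complete quotients at the start of the period), then b_{h-1} = b_{h+k-1}, i.e., the period can be shifted back one step. -/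
/-- Distinct elements of `J_p` differ by something of `p`-adic norm ≥ 1. -/
lemma Jp_eq_of_padicNorm_lt_one (p : ℕ) [hfp : Fact p.Prime] {a c : ℚ}
    (ha : a ∈ Jp p) (hc : c ∈ Jp p) (hn : padicNorm p (a - c) < 1) : a = c := by
  obtain ⟨⟨z, n, hz⟩, ha1, ha2⟩ := ha
  obtain ⟨⟨w, m, hw⟩, hc1, hc2⟩ := hc
  have hp1 : (1 : ℚ) < p := by exact_mod_cast hfp.out.one_lt
  have hp0 : (0 : ℚ) < p := lt_trans one_pos hp1
  by_contra hne
  have hd : a - c ≠ 0 := sub_ne_zero.mpr hne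
  -- the valuation of `a - c` is at least 1
  have hval : 1 ≤ padicValRat p (a - c) := by
    have heq := padicNorm.eq_zpow_of_nonzero (p := p) hd
    rw [heq] at hn
    have h0 : ((p : ℚ)) ^ (-padicValRat p (a - c)) < (p : ℚ) ^ (0 : ℤ) := by simpa using hn
    have := (zpow_lt_zpow_iff_right₀ hp1).mp h0
    omega
  -- clear denominators
  set Z : ℤ := z * (p : ℤ) ^ m - w * (p : ℤ) ^ n with hZ
  have hpow : ((p : ℚ) ^ (n + m)) ≠ 0 := by positivity
  have hdZ : (a - c) * (p : ℚ) ^ (n + m) = (Z : ℚ) := by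
    rw [hz, hw, hZ]
    push_cast
    field_simp
    ring
  have hZne : (Z : ℚ) ≠ 0 := by rw [← hdZ]; exact mul_ne_zero hd hpow
  have hZne' : Z ≠ 0 := by exact_mod_cast hZne
  -- valuation of `Z` is at least `n + m + 1`
  have hvpow : padicValRat p ((p : ℚ) ^ (n + m)) = (n + m : ℤ) := by
    rw [padicValRat.pow, padicValRat.self hfp.out.one_lt]
    push_cast; ring
  have hvZ : (n + m + 1 : ℤ) ≤ padicValRat p (Z : ℚ) := by
    rw [← hdZ, padicValRat.mul hd hpow, hvpow]
    omega
  have hvZ' : n + m + 1 ≤ padicValInt p Z := by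
    rw [padicValRat.of_int] at hvZ
    exact_mod_cast hvZ
  have hdvd : (p : ℤ) ^ (n + m + 1) ∣ Z :=
    (padicValInt_dvd_iff (n + m + 1) Z).mpr (Or.inr hvZ')
  obtain ⟨W, hW⟩ := hdvd
  -- so `a - c = p * W` with `W` an integer
  have hacW : a - c = (p : ℚ) * (W : ℚ) := by
    have : (a - c) * (p : ℚ) ^ (n + m) = (p : ℚ) * (W : ℚ) * (p : ℚ) ^ (n + m) := by
      rw [hdZ, hW]; push_cast; ring
    exact mul_right_cancel₀ hpow this
  have hWne : W ≠ 0 := by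
    intro h0
    rw [h0] at hacW
    simp at hacW
    exact hd hacW
  have hWabs : (1 : ℚ) ≤ |(W : ℚ)| := by
    have : (1 : ℤ) ≤ |W| := Int.one_le_abs hWne
    calc (1:ℚ) ≤ ((|W| : ℤ) : ℚ) := by exact_mod_cast this
    _ = |(W : ℚ)| := by push_cast; rfl
  -- but `|a - c| < p`
  have habs : |a - c| < p := by
    rw [abs_lt]
    constructor <;> linarith
  rw [hacW, abs_mul, abs_of_pos hp0] at habs
  nlinarith

lemma Padic.norm_lt_one_of_val_pos {p : ℕ} [hfp : Fact p.Prime] {x : ℚ_[p]}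
    (h : 0 < x.valuation) : ‖x‖ < 1 := by
  by_cases hx : x = 0
  · simp [hx]
  · rw [Padic.norm_eq_zpow_neg_valuation hx]
    have hp1 : (1 : ℝ) < p := by exact_mod_cast hfp.out.one_lt
    have : ((p : ℝ)) ^ (-x.valuation) < (p : ℝ) ^ (0 : ℤ) :=
      zpow_lt_zpow_right₀ hp1 (by omega)
    simpa using this

/-- For a Browkin II expansion of `α` with `|α|_p = 1`, `|ᾱ|_p < 1` and odd preperiod
length `h`: if `α_h = α_{h+k}` then `b_{h-1} = b_{h+k-1}` (the period shifts back one step). -/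
theorem browkinII_shift_back_odd (p : ℕ) [Fact p.Prime] (hp : Odd p)
    (α conj : ℚ_[p]) (hα : ‖α‖ = 1) (hconj : ‖conj‖ < 1)
    (b : ℕ → ℚ) (αs cs : ℕ → ℚ_[p])
    (hα0 : αs 0 = α) (hc0 : cs 0 = conj)
    (hrec : ∀ n, αs (n + 1) = (αs n - (b n : ℚ_[p]))⁻¹)
    (hcrec : ∀ n, cs (n + 1) = (cs n - (b n : ℚ_[p]))⁻¹)
    (hcne : ∀ n, cs n - (b n : ℚ_[p]) ≠ 0)
    (hJ : ∀ n, Even n → b n ∈ Jp p)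
    (hcval : ∀ j : ℕ, 0 < (cs (2 * j)).valuation)
    (h k : ℕ) (hh : Odd h) (hk : 0 < k) (hkeven : Even k)
    (hper : αs (h + k) = αs h) (hcper : cs (h + k) = cs h) :
    b (h - 1) = b (h + k - 1) := by
  obtain ⟨j, hj⟩ := hh
  obtain ⟨l, hl⟩ := hkeven
  have h1 : h - 1 + 1 = h := by omega
  have h2 : h + k - 1 + 1 = h + k := by omega
  have e1 : cs h = (cs (h - 1) - (b (h - 1) : ℚ_[p]))⁻¹ := by
    rw [← h1]; exact hcrec (h - 1)
  have e2 : cs (h + k) = (cs (h + k - 1) - (b (h + k - 1) : ℚ_[p]))⁻¹ := by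
    rw [← h2]; exact hcrec (h + k - 1)
  have heq : cs (h + k - 1) - (b (h + k - 1) : ℚ_[p]) = cs (h - 1) - (b (h - 1) : ℚ_[p]) := by
    have := hcper
    rw [e1, e2] at this
    exact inv_inj.mp this
  have hsub : ((b (h - 1) : ℚ_[p]) - (b (h + k - 1) : ℚ_[p]))
      = cs (h - 1) - cs (h + k - 1) := by
    linear_combination heq
  -- both conjugate complete quotients at even indices have norm < 1
  have hn1 : ‖cs (h - 1)‖ < 1 := by
    have : h - 1 = 2 * j := by omega
    rw [this]; exact Padic.norm_lt_one_of_val_pos (hcval j)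
  have hn2 : ‖cs (h + k - 1)‖ < 1 := by
    have : h + k - 1 = 2 * (j + l) := by omega
    rw [this]; exact Padic.norm_lt_one_of_val_pos (hcval (j + l))
  have hnorm : ‖(b (h - 1) : ℚ_[p]) - (b (h + k - 1) : ℚ_[p])‖ < 1 := by
    rw [hsub, sub_eq_add_neg]
    calc ‖cs (h - 1) + -cs (h + k - 1)‖
        ≤ max ‖cs (h - 1)‖ ‖-cs (h + k - 1)‖ := Padic.nonarchimedean _ _
      _ < 1 := by rw [norm_neg]; exact max_lt hn1 hn2
  have hpn : padicNorm p (b (h - 1) - b (h + k - 1)) < 1 := by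
    have : ((b (h - 1) - b (h + k - 1) : ℚ) : ℚ_[p])
        = (b (h - 1) : ℚ_[p]) - (b (h + k - 1) : ℚ_[p]) := by push_cast; ring
    have h2' : ((padicNorm p (b (h - 1) - b (h + k - 1)) : ℚ) : ℝ) < 1 := by
      rw [← Padic.eq_padicNorm, this]
      exact hnorm
    exact_mod_cast h2'
  exact Jp_eq_of_padicNorm_lt_one p (hJ (h - 1) ⟨j, by omega⟩) (hJ (h + k - 1) ⟨j + l, by omega⟩) hpn
end

section
/- Let p be an odd prime and suppose α ∈ ℚ_p has an eventually periodic Browkin II expansion with even preperiod length h and period length k. If α_h = α_{h+k} and both b_{h-1} = t(α_{h-1}) and b_{h+k-1} = t(α_{h+k-1}) are computed directly by the function t (no sign-correction), so that b_{h-1}, b_{h+k-1} ∈ K_p = ℤ[1/p] ∩ (−1/2, 1/2), then b_{h-1} = b_{h+k-1}. -/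
/-- `K_p = ℤ[1/p] ∩ (-1/2, 1/2)` as a subset of `ℚ`. -/
def Kp (p : ℕ) : Set ℚ :=
  {q | (∃ (z : ℤ) (n : ℕ), q = (z : ℚ) / (p : ℚ) ^ n) ∧ -(1 / 2 : ℚ) < q ∧ q < (1 / 2 : ℚ)}

lemma aux_zero (p : ℕ) (hp : p.Prime) (d : ℚ) (z : ℤ) (n : ℕ)
    (hd : d = (z : ℚ) / (p : ℚ) ^ n) (hnorm : padicNorm p d ≤ 1) (habs : |d| < 1) : d = 0 := by
  haveI : Fact p.Prime := ⟨hp⟩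
  by_contra h0
  have hden : (d.den : ℤ) ∣ (p : ℤ) ^ n := by
    have := Rat.den_dvd z ((p : ℤ) ^ n)
    rw [Rat.divInt_eq_div] at this
    push_cast at this
    rwa [← hd] at this
  have hdenn : d.den ∣ p ^ n := by exact_mod_cast hden
  have hval : 0 ≤ padicValRat p d := by
    rw [padicNorm.eq_zpow_of_nonzero h0] at hnorm
    by_contra hneg
    push_neg at hneg
    have : (1 : ℚ) < (p : ℚ) ^ (-padicValRat p d) := by
      apply one_lt_zpow₀ (by exact_mod_cast hp.one_lt)
      omega
    linarith
  have hpden : ¬ (p : ℤ) ∣ (d.den : ℤ) := by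
    intro hdvd
    have hnum : ¬ (p : ℤ) ∣ d.num := by
      intro hn
      have hred := d.reduced
      have hp' : p ∣ d.num.natAbs := Int.natCast_dvd_natCast.mp (by rwa [Int.dvd_natAbs])
      have hp'' : p ∣ d.den := Int.natCast_dvd_natCast.mp hdvd
      exact hp.one_lt.ne' (Nat.eq_one_of_dvd_coprimes hred hp' hp'')
    have h1 : padicValInt p d.num = 0 := padicValInt.eq_zero_of_not_dvd hnum
    have h2 : 1 ≤ padicValNat p d.den :=
      one_le_padicValNat_of_dvd d.den_ne_zero (Int.natCast_dvd_natCast.mp hdvd)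
    rw [padicValRat_def, h1] at hval
    omega
  have hden1 : d.den = 1 := by
    obtain ⟨j, hj, hje⟩ := (Nat.dvd_prime_pow hp).mp hdenn
    rcases Nat.eq_zero_or_pos j with h | h
    · simpa [h] using hje
    · exfalso; exact hpden (by rw [hje]; exact_mod_cast dvd_pow_self (p:ℤ) (by omega : j ≠ 0))
  have hint : d = (d.num : ℚ) := by rw [← Rat.num_div_den d, hden1]; simp
  rw [hint] at habs h0
  rw [abs_lt] at habs
  have h1 : -1 < d.num := by exact_mod_cast habs.1
  have h2 : d.num < 1 := by exact_mod_cast habs.2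
  have : d.num = 0 := by omega
  simp [this] at h0

/-- For a Browkin II expansion of `α` with `|α|_p = 1`, `|ᾱ|_p < 1` and even preperiod
length `h > 0`: if `α_h = α_{h+k}` and the partial quotients `b_{h-1}` and `b_{h+k-1}` are
computed directly by the function `t` (so they lie in `K_p`), then `b_{h-1} = b_{h+k-1}`. -/
theorem browkinII_shift_back_even (p : ℕ) [Fact p.Prime] (hp : Odd p)
    (α conj : ℚ_[p]) (hα : ‖α‖ = 1) (hconj : ‖conj‖ < 1)
    (b : ℕ → ℚ) (αs cs : ℕ → ℚ_[p])
    (hα0 : αs 0 = α) (hc0 : cs 0 = conj)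
    (hrec : ∀ n, αs (n + 1) = (αs n - (b n : ℚ_[p]))⁻¹)
    (hcrec : ∀ n, cs (n + 1) = (cs n - (b n : ℚ_[p]))⁻¹)
    (hcne : ∀ n, cs n - (b n : ℚ_[p]) ≠ 0)
    (hcval : ∀ j : ℕ, (cs (2 * j + 1)).valuation = 0)
    (h k : ℕ) (hh : Even h) (hhpos : 0 < h) (hk : 0 < k) (hkeven : Even k)
    (hK1 : b (h - 1) ∈ Kp p) (hK2 : b (h + k - 1) ∈ Kp p)
    (hper : αs (h + k) = αs h) (hcper : cs (h + k) = cs h) :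
    b (h - 1) = b (h + k - 1) := by
  obtain ⟨m, hm⟩ := hh
  obtain ⟨l, hl⟩ := hkeven
  have hm1 : 1 ≤ m := by omega
  have hl1 : 1 ≤ l := by omega
  have e1 : h - 1 + 1 = h := by omega
  have e2 : h + k - 1 + 1 = h + k := by omega
  -- equality of the previous complete quotients' differences
  have heq : cs (h - 1) - (b (h - 1) : ℚ_[p]) = cs (h + k - 1) - (b (h + k - 1) : ℚ_[p]) := by
    have r1 := hcrec (h - 1); rw [e1] at r1
    have r2 := hcrec (h + k - 1); rw [e2] at r2
    have := hcper
    rw [r1, r2] at this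
    exact (inv_inj.mp this).symm
  have hdiff : ((b (h - 1) - b (h + k - 1) : ℚ) : ℚ_[p]) = cs (h - 1) - cs (h + k - 1) := by
    push_cast
    linear_combination -heq
  -- norms of the conjugate complete quotients are 1
  have hne1 : cs (h - 1) ≠ 0 := by
    have e3 : h - 2 + 1 = h - 1 := by omega
    have := hcrec (h - 2); rw [e3] at this
    rw [this]; exact inv_ne_zero (hcne (h - 2))
  have hne2 : cs (h + k - 1) ≠ 0 := by
    have e3 : h + k - 2 + 1 = h + k - 1 := by omega
    have := hcrec (h + k - 2); rw [e3] at this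
    rw [this]; exact inv_ne_zero (hcne (h + k - 2))
  have hv1 : (cs (h - 1)).valuation = 0 := by
    have : h - 1 = 2 * (m - 1) + 1 := by omega
    rw [this]; exact hcval (m - 1)
  have hv2 : (cs (h + k - 1)).valuation = 0 := by
    have : h + k - 1 = 2 * (m + l - 1) + 1 := by omega
    rw [this]; exact hcval (m + l - 1)
  have hn1 : ‖cs (h - 1)‖ = 1 := by
    rw [Padic.norm_eq_zpow_neg_valuation hne1, hv1]; simp
  have hn2 : ‖cs (h + k - 1)‖ = 1 := by
    rw [Padic.norm_eq_zpow_neg_valuation hne2, hv2]; simp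
  -- norm of the difference is at most 1
  have hnormle : padicNorm p (b (h - 1) - b (h + k - 1)) ≤ 1 := by
    have := Padic.nonarchimedean (cs (h - 1)) (-(cs (h + k - 1)))
    rw [← sub_eq_add_neg, norm_neg, hn1, hn2, max_self] at this
    have h2 : ((padicNorm p (b (h - 1) - b (h + k - 1)) : ℚ) : ℝ) ≤ 1 := by
      rw [← Padic.eq_padicNorm, hdiff]; exact this
    exact_mod_cast h2
  -- the difference lies in ℤ[1/p] and has absolute value < 1
  obtain ⟨⟨z1, n1, hz1⟩, hlo1, hhi1⟩ := hK1
  obtain ⟨⟨z2, n2, hz2⟩, hlo2, hhi2⟩ := hK2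
  have habs : |b (h - 1) - b (h + k - 1)| < 1 := by
    rw [abs_lt]; constructor <;> linarith
  have hform : b (h - 1) - b (h + k - 1) =
      ((z1 * (p : ℤ) ^ n2 - z2 * (p : ℤ) ^ n1 : ℤ) : ℚ) / (p : ℚ) ^ (n1 + n2) := by
    have hp0 : (p : ℚ) ≠ 0 := by
      exact_mod_cast (Fact.out : p.Prime).ne_zero
    rw [hz1, hz2]
    push_cast
    field_simp
    ring
  have := aux_zero p (Fact.out) _ _ _ hform hnormle habs
  linarith [this]
end
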